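/- arXiv:2503.13993 — 2 statements merged into one kernel-verified Lean document; each statement's English description precedes it below -/
import Mathlib

section
/- There exists a constant C₂ > 1 such that for every integer k ≥ 2 and every real x ≥ 1, Σ_{d > x} μ²(d) τ_k(d) / d² ≤ C₂^k · (2k - 2 + log x)^{k-1} / x. -/
open ArithmeticFunction

/-- The `k`-th divisor function: the number of ways to write `n` as an ordered
product of `k` positive integers (the `k`-fold Dirichlet convolution of `ζ`). -/
def tauk (k n : ℕ) : ℕ := (zeta ^ k : ArithmeticFunction ℕ) n

open Finset Real

/-! Since `μ² ≤ 1`, it suffices to bound `S_k(x) = ∑_{d > x} τ_k(d) / d²`, by induction on `k`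
using `τ_{k+1}(d) = ∑_{ab = d} τ_k(a)`. The pairs with `a ≤ x` contribute
`∑_{a ≤ x} τ_k(a)/a² · ∑_{b > x/a} 1/b² ≤ (2/x) ∑_{a ≤ x} τ_k(a)/a ≤ 2 (1 + log x)^k / x`, the
last step because `∑_{a ≤ x} τ_k(a)/a ≤ (∑_{b ≤ x} 1/b)^k`; the pairs with `a > x` contribute at
most `S_k(x) · ∑_b 1/b² ≤ 2 S_k(x)`. This gives `S_k(x) ≤ 4^k (1 + log x)^(k-1) / x`. -/

lemma sum_inv_sq_le (t : Finset ℕ) : ∑ b ∈ t, ((b : ℝ) ^ 2)⁻¹ ≤ 2 := by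
  calc ∑ b ∈ t, ((b : ℝ) ^ 2)⁻¹ ≤ ∑ b ∈ Ioo 0 (t.sup id + 1), ((b : ℝ) ^ 2)⁻¹ := by
        rw [← sum_filter_ne_zero]
        refine sum_le_sum_of_subset_of_nonneg (fun b hb => ?_) fun _ _ _ => by positivity
        obtain ⟨hbt, hb0⟩ := mem_filter.mp hb
        have : b ≤ t.sup id := le_sup (f := id) hbt
        simp only [mem_Ioo]
        have hb : b ≠ 0 := by rintro rfl; simp at hb0
        exact ⟨Nat.pos_of_ne_zero hb, by omega⟩
    _ ≤ 2 := by simpa using sum_Ioo_inv_sq_le (α := ℝ) 0 (t.sup id + 1)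

lemma sum_inv_sq_tail_le {y : ℝ} (hy : 0 < y) (t : Finset ℕ) :
    ∑ b ∈ t, (if y < b then ((b : ℝ) ^ 2)⁻¹ else 0) ≤ 2 / y := by
  rw [← sum_filter]
  calc ∑ b ∈ t.filter fun b : ℕ => y < b, ((b : ℝ) ^ 2)⁻¹
      ≤ ∑ b ∈ Ioo ⌊y⌋₊ (t.sup id + 1), ((b : ℝ) ^ 2)⁻¹ := by
        refine sum_le_sum_of_subset_of_nonneg (fun b hb => ?_) fun _ _ _ => by positivity
        obtain ⟨hbt, hyb⟩ := mem_filter.mp hb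
        have : b ≤ t.sup id := le_sup (f := id) hbt
        simp only [mem_Ioo]
        exact ⟨(Nat.floor_lt hy.le).mpr hyb, by omega⟩
    _ ≤ 2 / (⌊y⌋₊ + 1) := sum_Ioo_inv_sq_le _ _
    _ ≤ 2 / y := by
        gcongr
        exact (Nat.lt_floor_add_one y).le

lemma harmonic_nonneg (n : ℕ) : 0 ≤ harmonic n := by
  rw [harmonic_eq_sum_Icc]
  positivity

lemma sum_sum_divisorsAntidiagonal_le {s t : Finset ℕ} (hst : ∀ d ∈ s, d.divisors ⊆ t)
    {f : ℕ × ℕ → ℝ} (hf : 0 ≤ f) :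
    ∑ d ∈ s, ∑ p ∈ d.divisorsAntidiagonal, f p ≤ ∑ a ∈ t, ∑ b ∈ t, f (a, b) := by
  rw [← sum_biUnion, ← sum_product']
  · refine sum_le_sum_of_subset_of_nonneg (fun p hp => ?_) fun p _ _ => hf p
    obtain ⟨d, hd, hp⟩ := mem_biUnion.mp hp
    exact mem_product.mpr ⟨hst d hd (Nat.fst_mem_divisors_of_mem_antidiagonal hp),
      hst d hd (Nat.snd_mem_divisors_of_mem_antidiagonal hp)⟩
  · intro d _ e _ hde
    refine disjoint_left.mpr fun p hpd hpe => hde ?_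
    rw [← (Nat.mem_divisorsAntidiagonal.mp hpd).1, (Nat.mem_divisorsAntidiagonal.mp hpe).1]

lemma tauk_zero_apply (n : ℕ) : tauk 0 n = if n = 1 then 1 else 0 := by
  rw [tauk, pow_zero, one_apply]

lemma tauk_one_apply {n : ℕ} (hn : n ≠ 0) : tauk 1 n = 1 := by
  rw [tauk, pow_one, zeta_apply_ne hn]

lemma tauk_succ_div_pow (k j d : ℕ) :
    (tauk (k + 1) d : ℝ) / (d : ℝ) ^ j
      = ∑ p ∈ d.divisorsAntidiagonal, (tauk k p.1 : ℝ) / (p.1 : ℝ) ^ j / (p.2 : ℝ) ^ j := by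
  rw [tauk, pow_succ, mul_apply, Nat.cast_sum, sum_div]
  refine sum_congr rfl fun p hp => ?_
  obtain ⟨hpd, -⟩ := Nat.mem_divisorsAntidiagonal.mp hp
  rw [zeta_apply_ne (Nat.right_ne_zero_of_mem_divisorsAntidiagonal hp), mul_one, ← hpd,
    Nat.cast_mul, mul_pow, div_div, tauk]

lemma sum_tauk_div_le_harmonic_pow (k N : ℕ) :
    ∑ a ∈ Icc 1 N, (tauk k a : ℝ) / a ≤ (harmonic N : ℝ) ^ k := by
  induction k with
  | zero =>
    simp only [tauk_zero_apply, Nat.cast_ite, Nat.cast_one, Nat.cast_zero, ite_div, zero_div,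
      sum_ite_eq', pow_zero]
    split_ifs <;> norm_num
  | succ k ih =>
    have hdiv : ∀ d ∈ Icc 1 N, d.divisors ⊆ Icc 1 N := fun d hd a ha =>
      mem_Icc.mpr ⟨Nat.pos_of_mem_divisors ha, (Nat.divisor_le ha).trans (mem_Icc.mp hd).2⟩
    calc ∑ a ∈ Icc 1 N, (tauk (k + 1) a : ℝ) / a
        = ∑ d ∈ Icc 1 N, ∑ p ∈ d.divisorsAntidiagonal,
            (tauk k p.1 : ℝ) / p.1 / p.2 := by
          refine sum_congr rfl fun d _ => ?_
          simpa only [pow_one] using tauk_succ_div_pow k 1 d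
      _ ≤ ∑ a ∈ Icc 1 N, ∑ b ∈ Icc 1 N, (tauk k a : ℝ) / a / b :=
          sum_sum_divisorsAntidiagonal_le hdiv fun _ => by positivity
      _ = (∑ a ∈ Icc 1 N, (tauk k a : ℝ) / a) * harmonic N := by
          simp only [harmonic_eq_sum_Icc, Rat.cast_sum, Rat.cast_inv, Rat.cast_natCast,
            sum_mul_sum, div_eq_mul_inv]
      _ ≤ (harmonic N : ℝ) ^ (k + 1) := by
          rw [pow_succ]
          gcongr
          exact_mod_cast harmonic_nonneg N

lemma sum_tail_tauk_succ_le (k : ℕ) {x : ℝ} (hx : 0 < x) (s : Finset ℕ) :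
    ∑ d ∈ s, (if x < d then (tauk (k + 1) d : ℝ) / (d : ℝ) ^ 2 else 0)
      ≤ 2 / x * ∑ a ∈ Icc 1 ⌊x⌋₊, (tauk k a : ℝ) / a
        + 2 * ∑ a ∈ s.biUnion Nat.divisors,
            (if x < a then (tauk k a : ℝ) / (a : ℝ) ^ 2 else 0) := by
  set t := s.biUnion Nat.divisors
  have hst : ∀ d ∈ s, d.divisors ⊆ t := fun d hd => subset_biUnion_of_mem Nat.divisors hd
  have hinner : ∀ a ∈ t,
      ∑ b ∈ t, (if x < (a : ℝ) * b then (tauk k a : ℝ) / (a : ℝ) ^ 2 / (b : ℝ) ^ 2 else 0)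
        ≤ if x < a then 2 * ((tauk k a : ℝ) / (a : ℝ) ^ 2) else 2 / x * ((tauk k a : ℝ) / a) := by
    intro a ha
    obtain ⟨d, -, had⟩ := mem_biUnion.mp ha
    have ha0 : (0 : ℝ) < a := Nat.cast_pos.mpr (Nat.pos_of_mem_divisors had)
    have hfactor : ∑ b ∈ t, (if x < (a : ℝ) * b then (tauk k a : ℝ) / (a : ℝ) ^ 2 / (b : ℝ) ^ 2
        else 0) = (tauk k a : ℝ) / (a : ℝ) ^ 2 * ∑ b ∈ t, (if x / a < b then ((b : ℝ) ^ 2)⁻¹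
        else 0) := by
      rw [mul_sum]
      refine sum_congr rfl fun b _ => ?_
      rw [mul_ite, mul_zero, div_eq_mul_inv]
      exact if_congr (div_lt_iff₀' ha0).symm rfl rfl
    rw [hfactor]
    split_ifs with hax
    · calc _ ≤ (tauk k a : ℝ) / (a : ℝ) ^ 2 * ∑ b ∈ t, ((b : ℝ) ^ 2)⁻¹ := by
            gcongr with b
            split_ifs <;> first | exact le_rfl | positivity
        _ ≤ (tauk k a : ℝ) / (a : ℝ) ^ 2 * 2 := by gcongr; exact sum_inv_sq_le t
        _ = _ := mul_comm _ _
    · calc _ ≤ (tauk k a : ℝ) / (a : ℝ) ^ 2 * (2 / (x / a)) := by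
            gcongr
            exact sum_inv_sq_tail_le (div_pos hx ha0) t
        _ = _ := by field_simp
  calc ∑ d ∈ s, (if x < d then (tauk (k + 1) d : ℝ) / (d : ℝ) ^ 2 else 0)
      = ∑ d ∈ s, ∑ p ∈ d.divisorsAntidiagonal, (if x < (p.1 : ℝ) * p.2 then
          (tauk k p.1 : ℝ) / (p.1 : ℝ) ^ 2 / (p.2 : ℝ) ^ 2 else 0) := by
        refine sum_congr rfl fun d _ => ?_
        have hprod : ∀ p ∈ d.divisorsAntidiagonal, (p.1 : ℝ) * p.2 = d := fun p hp => by
          exact_mod_cast (Nat.mem_divisorsAntidiagonal.mp hp).1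
        rw [tauk_succ_div_pow]
        split_ifs with hxd
        · exact sum_congr rfl fun p hp => (if_pos (hprod p hp ▸ hxd)).symm
        · exact (sum_eq_zero fun p hp => if_neg (hprod p hp ▸ hxd)).symm
    _ ≤ ∑ a ∈ t, ∑ b ∈ t, (if x < (a : ℝ) * b then
          (tauk k a : ℝ) / (a : ℝ) ^ 2 / (b : ℝ) ^ 2 else 0) :=
        sum_sum_divisorsAntidiagonal_le hst fun _ => by dsimp only; split_ifs <;> positivity
    _ ≤ ∑ a ∈ t, if x < a then 2 * ((tauk k a : ℝ) / (a : ℝ) ^ 2)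
          else 2 / x * ((tauk k a : ℝ) / a) := sum_le_sum hinner
    _ = 2 * ∑ a ∈ t, (if x < a then (tauk k a : ℝ) / (a : ℝ) ^ 2 else 0)
          + 2 / x * ∑ a ∈ t.filter fun a : ℕ => ¬ x < a, (tauk k a : ℝ) / a := by
        rw [sum_ite, ← mul_sum, ← mul_sum, sum_filter]
    _ ≤ _ := by
        rw [add_comm]
        gcongr
        intro a ha
        obtain ⟨hat, hax⟩ := mem_filter.mp ha
        obtain ⟨d, -, had⟩ := mem_biUnion.mp hat
        exact mem_Icc.mpr ⟨Nat.pos_of_mem_divisors had, Nat.le_floor (not_lt.mp hax)⟩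

lemma sum_tail_tauk_div_sq_le (k : ℕ) {x : ℝ} (hx : 1 ≤ x) (s : Finset ℕ) :
    ∑ d ∈ s, (if x < d then (tauk (k + 1) d : ℝ) / (d : ℝ) ^ 2 else 0)
      ≤ 4 ^ (k + 1) * (1 + log x) ^ k / x := by
  have hx0 : 0 < x := by linarith
  induction k generalizing s with
  | zero =>
    calc _ = ∑ d ∈ s, (if x < d then ((d : ℝ) ^ 2)⁻¹ else 0) := by
          refine sum_congr rfl fun d _ => ?_
          split_ifs with hxd
          · have hd : d ≠ 0 := by rintro rfl; simp at hxd; linarith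
            rw [tauk_one_apply hd, Nat.cast_one, one_div]
          · rfl
      _ ≤ 2 / x := sum_inv_sq_tail_le hx0 s
      _ ≤ _ := by gcongr; norm_num
  | succ k ih =>
    set L := 1 + log x
    have hL : 1 ≤ L := le_add_of_nonneg_right (log_nonneg hx)
    have hT : ∑ a ∈ Icc 1 ⌊x⌋₊, (tauk (k + 1) a : ℝ) / a ≤ L ^ (k + 1) :=
      (sum_tauk_div_le_harmonic_pow _ _).trans <| pow_le_pow_left₀
        (by exact_mod_cast harmonic_nonneg _) (harmonic_floor_le_one_add_log x hx) _
    have hsmall : L ^ (k + 1) ≤ 4 ^ (k + 1) * L ^ (k + 1) :=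
      le_mul_of_one_le_left (pow_nonneg (zero_le_one.trans hL) _) (one_le_pow₀ (by norm_num))
    have hmono : 4 ^ (k + 1) * L ^ k ≤ 4 ^ (k + 1) * L ^ (k + 1) :=
      mul_le_mul_of_nonneg_left (pow_le_pow_right₀ hL k.le_succ) (by positivity)
    calc _ ≤ 2 / x * ∑ a ∈ Icc 1 ⌊x⌋₊, (tauk (k + 1) a : ℝ) / a
          + 2 * ∑ a ∈ s.biUnion Nat.divisors,
            (if x < a then (tauk (k + 1) a : ℝ) / (a : ℝ) ^ 2 else 0) :=
          sum_tail_tauk_succ_le _ hx0 s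
      _ ≤ 2 / x * L ^ (k + 1) + 2 * (4 ^ (k + 1) * L ^ k / x) := by gcongr; exact ih _
      _ = (2 * L ^ (k + 1) + 2 * (4 ^ (k + 1) * L ^ k)) / x := by ring
      _ ≤ 4 ^ (k + 1 + 1) * L ^ (k + 1) / x := by
          gcongr
          rw [pow_succ 4 (k + 1)]
          linarith

theorem stmt_3 :
    ∃ C₂ : ℝ, 1 < C₂ ∧ ∀ k : ℕ, 2 ≤ k → ∀ x : ℝ, 1 ≤ x →
      (∑' d : ℕ, if x < (d : ℝ) then ((moebius d : ℝ)) ^ 2 * (tauk k d : ℝ) / (d : ℝ) ^ 2 else 0)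
        ≤ C₂ ^ k * (2 * (k : ℝ) - 2 + Real.log x) ^ (k - 1) / x := by
  refine ⟨4, by norm_num, fun k hk x hx => ?_⟩
  obtain ⟨j, rfl⟩ : ∃ j, k = j + 1 := ⟨k - 1, by omega⟩
  have hμ : ∀ d, (moebius d : ℝ) ^ 2 ≤ 1 := fun d =>
    (sq_le_one_iff_abs_le_one _).mpr (by exact_mod_cast abs_moebius_le_one)
  have hterm : ∀ d : ℕ, (if x < d then (moebius d : ℝ) ^ 2 * (tauk (j + 1) d : ℝ) / (d : ℝ) ^ 2
      else 0) ≤ if x < d then (tauk (j + 1) d : ℝ) / (d : ℝ) ^ 2 else 0 := fun d => by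
    split_ifs
    · rw [mul_div_assoc]
      exact mul_le_of_le_one_left (by positivity) (hμ d)
    · rfl
  calc _ ≤ 4 ^ (j + 1) * (1 + log x) ^ j / x :=
        Real.tsum_le_of_sum_le (fun d => by dsimp only; split_ifs <;> positivity)
          fun s => (sum_le_sum fun d _ => hterm d).trans (sum_tail_tauk_div_sq_le j hx s)
    _ ≤ _ := by
        rw [Nat.add_sub_cancel]
        gcongr
        · exact add_nonneg zero_le_one (log_nonneg hx)
        · push_cast
          linarith [(show (1 : ℝ) ≤ j by exact_mod_cast (by omega : 1 ≤ j))]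
end

section
/- Suppose X, Y ≥ 1 are real numbers, and α is a real number admitting a rational approximation a/q with |α − a/q| < 1/q², gcd(a, q) = 1, q ≥ 1. Then Σ_{n ≤ X} min(XY/n, 1/‖αn‖) ≪ XY (1/q + 1/Y + q/(XY)) log(2Xq), with an absolute implied constant. -/
/-- Distance from a real number to the nearest integer. -/
noncomputable def nintDist (y : ℝ) : ℝ := |y - round y|

/-- `min (A, 1/‖t‖)`, interpreted as `A` when `‖t‖ = 0` (i.e. `1/‖t‖ = ∞`). -/
noncomputable def minInv (A t : ℝ) : ℝ :=
  if nintDist t = 0 then A else min A (1 / nintDist t)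

/-! Write `δ = α - a / q` and cut `1 ≤ n ≤ X` into blocks `m ≤ n < m + q` with `m = h q`. On such a
block `α n = (a n + δ m q) / q + δ (n - m)`, where the perturbation `δ (n - m)` is at most `1 / q`.
Because `gcd (a, q) = 1`, the main terms lie in pairwise distinct cells `⌊a n + δ m q⌋ mod q` of
width `1 / q`. A term whose cell is `v ≥ 2` cells away from the integers has `‖α n‖ ≥ (v - 1) / q`, and
each `v` occurs for at most two cells, so apart from four terms the block contributes
`≪ ∑_{v < q} q / v ≪ q log q`. With `A` a bound for `XY / n` on the block, a block costs `≪ A + q log q`.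
One can take `A ≍ XY / ((h + 1) q)`, except for `2 n < q`, where `‖α n‖ ≥ ‖a n / q‖ - n / q² ≥ 1 / (2 q)`
and `A = 2 q` works. Summing over the `X / q + 1` blocks gives `≪ (XY / q) log X + (X + q) log q`. -/

open Finset

lemma nintDist_sub_abs_le (x e : ℝ) : nintDist x - |e| ≤ nintDist (x + e) := by
  have : nintDist x ≤ nintDist (x + e) + |e| :=
    calc nintDist x ≤ |x - round (x + e)| := round_le x _
      _ = |(x + e - round (x + e)) + -e| := by ring_nf
      _ ≤ nintDist (x + e) + |e| := by rw [← abs_neg e]; exact abs_add_le _ _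
  linarith

lemma one_div_le_nintDist_intCast_div {q : ℕ} (hq : 0 < q) {k : ℤ} (hk : ¬ (q : ℤ) ∣ k) :
    1 / (q : ℝ) ≤ nintDist (k / q) := by
  have hq' : (0 : ℝ) < q := by exact_mod_cast hq
  have hne : k - q * round ((k : ℝ) / q) ≠ 0 := fun h => hk ⟨_, by linarith⟩
  have hone : (1 : ℝ) ≤ |((k - q * round ((k : ℝ) / q) : ℤ) : ℝ)| := by
    exact_mod_cast Int.one_le_abs hne
  have hsplit : (k : ℝ) / q - round ((k : ℝ) / q) = ((k - q * round ((k : ℝ) / q) : ℤ) : ℝ) / q := by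
    push_cast; field_simp
  unfold nintDist
  rw [hsplit, abs_div, abs_of_pos hq']
  exact div_le_div_of_nonneg_right hone hq'.le

lemma le_nintDist_div_of_floor_emod {q : ℕ} (hq : 0 < q) (y : ℝ) {v : ℕ}
    (h₁ : (v : ℤ) ≤ ⌊y⌋ % q) (h₂ : v + ⌊y⌋ % q + 1 ≤ q) : (v : ℝ) / q ≤ nintDist (y / q) := by
  have hq' : (0 : ℝ) < q := by exact_mod_cast hq
  set M := round (y / q)
  set s := ⌊y⌋ / q
  set i := ⌊y⌋ % q
  have hdecomp : (q : ℝ) * s + i = ⌊y⌋ := by exact_mod_cast Int.mul_ediv_add_emod ⌊y⌋ q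
  have hy₁ : (⌊y⌋ : ℝ) ≤ y := Int.floor_le y
  have hy₂ : y < ⌊y⌋ + 1 := Int.lt_floor_add_one y
  have h₁' : (v : ℝ) ≤ i := by exact_mod_cast h₁
  have h₂' : (v : ℝ) + i + 1 ≤ q := by exact_mod_cast h₂
  have hsplit : y / q - M = (y - q * M) / q := by field_simp
  unfold nintDist
  rw [hsplit, abs_div, abs_of_pos hq', div_le_div_iff_of_pos_right hq']
  rcases le_or_gt M s with hM | hM
  · have : (q : ℝ) * M ≤ q * s := mul_le_mul_of_nonneg_left (by exact_mod_cast hM) hq'.le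
    exact le_abs.mpr (Or.inl (by linarith))
  · have : (q : ℝ) * (s + 1) ≤ q * M :=
      mul_le_mul_of_nonneg_left (by exact_mod_cast hM) hq'.le
    exact le_abs.mpr (Or.inr (by linarith))

lemma minInv_le_left (A t : ℝ) : minInv A t ≤ A := by
  unfold minInv; split_ifs
  exacts [le_rfl, min_le_left _ _]

lemma minInv_le_one_div {A c t : ℝ} (hc : 0 < c) (h : c ≤ nintDist t) :
    minInv A t ≤ 1 / c := by
  rw [minInv, if_neg (by linarith)]
  exact (min_le_right _ _).trans (one_div_le_one_div_of_le hc h)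

lemma minInv_mono {A B : ℝ} (h : A ≤ B) (t : ℝ) : minInv A t ≤ minInv B t := by
  unfold minInv; split_ifs
  exacts [h, min_le_min_right _ h]

lemma minInv_le_minInv_of_le_nintDist {A B c t : ℝ} (hc : 0 < c) (h : c ≤ nintDist t)
    (hB : 1 / c ≤ B) : minInv A t ≤ minInv B t := by
  have hne : nintDist t ≠ 0 := by linarith
  have h1 : 1 / nintDist t ≤ B := (one_div_le_one_div_of_le hc h).trans hB
  rw [minInv, minInv, if_neg hne, if_neg hne, min_eq_right h1]
  exact min_le_right _ _

/-- Majorant of `min (A, 1 / ‖t‖)` when `t` lies `v` cells of width `1 / q` away from the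
integers: then `‖t‖ ≥ (v - 1) / q`, and `q / (v - 1) ≤ 3 q / (v + 1)` for `v ≥ 2`. -/
noncomputable def cellBound (A : ℝ) (q v : ℕ) : ℝ := (if v ≤ 1 then A else 0) + 3 * q / (v + 1)

lemma cellBound_nonneg {A : ℝ} (hA : 0 ≤ A) (q v : ℕ) : 0 ≤ cellBound A q v :=
  add_nonneg (by split_ifs <;> simp [hA]) (by positivity)

lemma minInv_le_cellBound {A t : ℝ} {q v : ℕ} (hq : 0 < q)
    (h : ((v : ℝ) - 1) / q ≤ nintDist t) : minInv A t ≤ cellBound A q v := by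
  have hq' : (0 : ℝ) < q := by exact_mod_cast hq
  unfold cellBound
  split_ifs with hv
  · have : 0 ≤ 3 * (q : ℝ) / (v + 1) := by positivity
    linarith [minInv_le_left A t]
  · have hv' : (2 : ℝ) ≤ v := by exact_mod_cast (by omega : 2 ≤ v)
    refine (minInv_le_one_div (div_pos (by linarith) hq') h).trans ?_
    rw [one_div_div, zero_add, div_le_div_iff₀ (by linarith) (by linarith)]
    nlinarith

lemma sum_range_cellBound_le {A : ℝ} (hA : 0 ≤ A) (q : ℕ) :
    ∑ v ∈ range q, cellBound A q v ≤ 2 * A + 3 * q * (1 + Real.log q) := by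
  have hsmall : ∑ v ∈ range q, (if v ≤ 1 then A else 0) ≤ 2 * A := by
    rw [← sum_filter]
    calc ∑ v ∈ (range q).filter (· ≤ 1), A ≤ ∑ v ∈ range 2, A :=
          sum_le_sum_of_subset_of_nonneg (fun v hv => by simp at hv ⊢; omega) (fun _ _ _ => hA)
      _ = 2 * A := by simp
  have hharm : ∑ v ∈ range q, 3 * (q : ℝ) / (v + 1) = 3 * q * harmonic q := by
    simp [harmonic, mul_sum, div_eq_mul_inv]
  have := harmonic_le_one_add_log q
  unfold cellBound
  rw [sum_add_distrib, hharm]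
  have : (0 : ℝ) ≤ 3 * q := by positivity
  nlinarith

lemma sum_range_min_sub_le {F : ℕ → ℝ} (hF : ∀ v, 0 ≤ F v) (q : ℕ) :
    ∑ r ∈ range q, F (min r (q - 1 - r)) ≤ 2 * ∑ r ∈ range q, F r := by
  calc ∑ r ∈ range q, F (min r (q - 1 - r))
      ≤ ∑ r ∈ range q, (F r + F (q - 1 - r)) := by
        refine sum_le_sum fun r _ => ?_
        rcases min_choice r (q - 1 - r) with h | h <;> rw [h] <;> linarith [hF r, hF (q - 1 - r)]
    _ = 2 * ∑ r ∈ range q, F r := by rw [sum_add_distrib, sum_range_reflect F q]; ring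

lemma sum_comp_le_sum_of_injOn {ι κ : Type*} [DecidableEq κ] {s : Finset ι} {t : Finset κ}
    {g : ι → κ} {f : κ → ℝ} (hg : Set.MapsTo g s t) (hinj : Set.InjOn g s)
    (hf : ∀ y ∈ t, 0 ≤ f y) : ∑ x ∈ s, f (g x) ≤ ∑ y ∈ t, f y := by
  rw [← sum_image hinj]
  exact sum_le_sum_of_subset_of_nonneg (image_subset_iff.mpr fun x hx => hg hx) fun y hy _ => hf y hy

section Block

variable {α : ℝ} {a : ℤ} {q : ℕ}

lemma emod_toNat_injOn_Ico (hq : 0 < q) (hgcd : Int.gcd a q = 1) (k : ℤ) (m : ℕ) :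
    Set.InjOn (fun n : ℕ => ((a * n + k) % q).toNat) (Ico m (m + q)) := by
  intro n₁ hn₁ n₂ hn₂ he
  have hq' : (q : ℤ) ≠ 0 := by exact_mod_cast hq.ne'
  have hmod : (a * n₁ + k) % q = (a * n₂ + k) % q := by
    have := Int.emod_nonneg (a * n₁ + k) hq'
    have := Int.emod_nonneg (a * n₂ + k) hq'
    simp only at he
    omega
  have hdvd : (q : ℤ) ∣ a * ((n₂ : ℤ) - n₁) := by
    have := Int.ModEq.dvd hmod
    rwa [show a * n₂ + k - (a * n₁ + k) = a * ((n₂ : ℤ) - n₁) by ring] at this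
  have hcop : IsCoprime (q : ℤ) a := (Int.isCoprime_iff_gcd_eq_one.mpr hgcd).symm
  have := Int.eq_zero_of_abs_lt_dvd (hcop.dvd_of_dvd_mul_left hdvd)
    (by simp only [coe_Ico, Set.mem_Ico] at hn₁ hn₂; rw [abs_lt]; omega)
  omega

theorem sum_minInv_le_of_subset_Ico (hq : 0 < q) (hgcd : Int.gcd a q = 1)
    (hα : |α - a / q| ≤ 1 / (q : ℝ) ^ 2) {A : ℝ} (hA : 0 ≤ A) {m : ℕ} {S : Finset ℕ}
    (hS : S ⊆ Ico m (m + q)) :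
    ∑ n ∈ S, minInv A (α * n) ≤ 4 * A + 6 * q * (1 + Real.log q) := by
  have hq' : (0 : ℝ) < q := by exact_mod_cast hq
  set δ := α - a / q
  set c : ℝ := δ * m * q
  set r : ℕ → ℕ := fun n => ((a * n + ⌊c⌋) % q).toNat
  have hterm : ∀ n ∈ S, minInv A (α * n) ≤ cellBound A q (min (r n) (q - 1 - r n)) := by
    intro n hn
    obtain ⟨hmn, hnm⟩ := mem_Ico.mp (hS hn)
    apply minInv_le_cellBound hq
    set y : ℝ := ((a * n : ℤ) : ℝ) + c
    have hsplit : α * n = y / q + δ * (n - m) := by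
      simp only [y, c, δ]; push_cast; field_simp; ring
    have hpert : |δ * (n - m)| ≤ 1 / q := by
      have h0 : (0 : ℝ) ≤ n - m := by rw [sub_nonneg]; exact_mod_cast hmn
      have h1 : (n : ℝ) - m ≤ q := by
        rw [sub_le_iff_le_add']; exact_mod_cast (by omega : n ≤ m + q)
      calc |δ * (n - m)| = |δ| * (n - m) := by rw [abs_mul, abs_of_nonneg h0]
        _ ≤ 1 / q ^ 2 * q := mul_le_mul hα h1 h0 (by positivity)
        _ = 1 / q := by field_simp
    have hfloor : ⌊y⌋ = a * n + ⌊c⌋ := Int.floor_intCast_add _ _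
    have hnonneg := Int.emod_nonneg (a * n + ⌊c⌋) (by exact_mod_cast hq.ne' : (q : ℤ) ≠ 0)
    have := Int.emod_lt_of_pos (a * n + ⌊c⌋) (by exact_mod_cast hq : (0 : ℤ) < q)
    have hr : (r n : ℤ) = (a * n + ⌊c⌋) % q := Int.toNat_of_nonneg hnonneg
    have hcell := le_nintDist_div_of_floor_emod hq y (v := min (r n) (q - 1 - r n))
      (by rw [hfloor]; omega) (by rw [hfloor]; omega)
    have := nintDist_sub_abs_le (y / q) (δ * (n - m))
    rw [← hsplit] at this
    rw [sub_div]
    linarith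
  calc ∑ n ∈ S, minInv A (α * n) ≤ ∑ n ∈ S, cellBound A q (min (r n) (q - 1 - r n)) :=
        sum_le_sum hterm
    _ ≤ ∑ v ∈ range q, cellBound A q (min v (q - 1 - v)) := by
        refine sum_comp_le_sum_of_injOn (f := fun v => cellBound A q (min v (q - 1 - v)))
          (fun n _ => ?_) ((emod_toNat_injOn_Ico hq hgcd _ m).mono hS)
          fun v _ => cellBound_nonneg hA q _
        have := Int.emod_lt_of_pos (a * n + ⌊c⌋) (by exact_mod_cast hq : (0 : ℤ) < q)
        simp only [coe_range, Set.mem_Iio, r]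
        omega
    _ ≤ 2 * ∑ v ∈ range q, cellBound A q v := sum_range_min_sub_le (cellBound_nonneg hA q) q
    _ ≤ 4 * A + 6 * q * (1 + Real.log q) := by linarith [sum_range_cellBound_le hA q]

lemma one_div_two_mul_le_nintDist (hq : 0 < q) (hgcd : Int.gcd a q = 1)
    (hα : |α - a / q| ≤ 1 / (q : ℝ) ^ 2) {n : ℕ} (hn : 0 < n) (h2n : 2 * n < q) :
    1 / (2 * q) ≤ nintDist (α * n) := by
  have hq' : (0 : ℝ) < q := by exact_mod_cast hq
  set δ := α - a / q
  have hsplit : α * n = ((a * n : ℤ) : ℝ) / q + δ * n := by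
    simp only [δ]; push_cast; field_simp; ring
  have hndvd : ¬ (q : ℤ) ∣ a * n := fun h => by
    have hcop : IsCoprime (q : ℤ) a := (Int.isCoprime_iff_gcd_eq_one.mpr hgcd).symm
    have := Int.le_of_dvd (by exact_mod_cast hn) (hcop.dvd_of_dvd_mul_left h)
    omega
  have hpert : |δ * n| ≤ 1 / (2 * q) := by
    have h1 : (n : ℝ) ≤ q / 2 := by
      rw [le_div_iff₀ two_pos]; exact_mod_cast (by omega : n * 2 ≤ q)
    calc |δ * n| = |δ| * n := by rw [abs_mul, Nat.abs_cast]
      _ ≤ 1 / q ^ 2 * (q / 2) := mul_le_mul hα h1 (by positivity) (by positivity)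
      _ = 1 / (2 * q) := by field_simp
  have := one_div_le_nintDist_intCast_div hq hndvd
  have := nintDist_sub_abs_le (((a * n : ℤ) : ℝ) / q) (δ * n)
  rw [← hsplit] at this
  have : 1 / (q : ℝ) = 1 / (2 * q) + 1 / (2 * q) := by field_simp; norm_num
  linarith

lemma minInv_div_le_minInv_of_mul_le (hq : 0 < q) (hgcd : Int.gcd a q = 1)
    (hα : |α - a / q| ≤ 1 / (q : ℝ) ^ 2) {U : ℝ} (hU : 0 ≤ U) {n h : ℕ} (hn : 0 < n)
    (hhq : h * q ≤ n) :
    minInv (U / n) (α * n) ≤ minInv (2 * q + 2 * (U / ((h + 1) * q))) (α * n) := by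
  have hq' : (0 : ℝ) < q := by exact_mod_cast hq
  have hUh : 0 ≤ U / ((h + 1) * q) := by positivity
  by_cases hbig : (h + 1) * q ≤ 2 * n
  · refine minInv_mono ?_ _
    have : U / n ≤ 2 * (U / ((h + 1) * q)) := by
      rw [← mul_div_assoc, div_le_div_iff₀ (by positivity) (by positivity)]
      have : ((h + 1 : ℕ) : ℝ) * q ≤ 2 * n := by exact_mod_cast hbig
      push_cast at this
      nlinarith
    linarith
  · -- `h * q ≤ n` rules out `h ≥ 1` here
    have h2n : 2 * n < q := by
      rcases Nat.eq_zero_or_pos h with rfl | hh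
      · omega
      · have := Nat.le_mul_of_pos_left q hh
        rw [add_mul, one_mul] at hbig
        omega
    refine minInv_le_minInv_of_le_nintDist (by positivity)
      (one_div_two_mul_le_nintDist hq hgcd hα hn h2n) ?_
    rw [one_div_one_div]
    linarith

theorem sum_minInv_div_le (hq : 0 < q) (hgcd : Int.gcd a q = 1)
    (hα : |α - a / q| ≤ 1 / (q : ℝ) ^ 2) {U : ℝ} (hU : 0 ≤ U) (N : ℕ) :
    ∑ n ∈ Icc 1 N, minInv (U / n) (α * n)
      ≤ 8 * (U / q) * (1 + Real.log (N + 1)) + (N + q) * (14 + 6 * Real.log q) := by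
  have hq' : (0 : ℝ) < q := by exact_mod_cast hq
  set H := N / q + 1
  have hmaps : ∀ n ∈ Icc 1 N, n / q ∈ range H := fun n hn => by
    have := Nat.div_le_div_right (c := q) (mem_Icc.mp hn).2
    rw [mem_range]; omega
  have hblock : ∀ h ∈ range H, ∑ n ∈ Icc 1 N with n / q = h, minInv (U / n) (α * n)
      ≤ 8 * (U / q) * (1 / (h + 1)) + q * (14 + 6 * Real.log q) := by
    intro h _
    set A := 2 * q + 2 * (U / ((h + 1) * q))
    have hsub : {n ∈ Icc 1 N | n / q = h} ⊆ Ico (h * q) (h * q + q) := fun n hn => by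
      obtain ⟨-, rfl⟩ := mem_filter.mp hn
      exact mem_Ico.mpr ⟨Nat.div_mul_le_self n q, Nat.lt_div_mul_add hq⟩
    have hdom : ∀ n ∈ {n ∈ Icc 1 N | n / q = h}, minInv (U / n) (α * n) ≤ minInv A (α * n) :=
      fun n hn => minInv_div_le_minInv_of_mul_le hq hgcd hα hU
        (mem_Icc.mp (mem_filter.mp hn).1).1 (mem_Ico.mp (hsub hn)).1
    calc ∑ n ∈ Icc 1 N with n / q = h, minInv (U / n) (α * n)
        ≤ ∑ n ∈ Icc 1 N with n / q = h, minInv A (α * n) := sum_le_sum hdom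
      _ ≤ 4 * A + 6 * q * (1 + Real.log q) :=
          sum_minInv_le_of_subset_Ico hq hgcd hα (by positivity) hsub
      _ = 8 * (U / q) * (1 / (h + 1)) + q * (14 + 6 * Real.log q) := by
          simp only [A]; field_simp; ring
  have hH : (H : ℝ) ≤ N + 1 := by exact_mod_cast (by have := Nat.div_le_self N q; omega : H ≤ N + 1)
  have hHq : (H : ℝ) * q ≤ N + q := by
    have : N / q * q ≤ N := Nat.div_mul_le_self N q
    exact_mod_cast (by rw [add_mul, one_mul]; omega : H * q ≤ N + q)
  have hharm : (harmonic H : ℝ) ≤ 1 + Real.log (N + 1) :=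
    (harmonic_le_one_add_log H).trans (by gcongr)
  have hlogq : 0 ≤ Real.log q := Real.log_nonneg (by exact_mod_cast hq)
  calc ∑ n ∈ Icc 1 N, minInv (U / n) (α * n)
      = ∑ h ∈ range H, ∑ n ∈ Icc 1 N with n / q = h, minInv (U / n) (α * n) :=
        (sum_fiberwise_of_maps_to hmaps _).symm
    _ ≤ ∑ h ∈ range H, (8 * (U / q) * (1 / (h + 1)) + q * (14 + 6 * Real.log q)) :=
        sum_le_sum hblock
    _ = 8 * (U / q) * harmonic H + H * q * (14 + 6 * Real.log q) := by
        simp [harmonic, sum_add_distrib, ← mul_sum, mul_assoc]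
    _ ≤ 8 * (U / q) * (1 + Real.log (N + 1)) + (N + q) * (14 + 6 * Real.log q) := by
        gcongr

end Block

theorem stmt_9 :
    ∃ C : ℝ, 0 < C ∧ ∀ (X Y α : ℝ) (a : ℤ) (q : ℕ), 1 ≤ X → 1 ≤ Y → 1 ≤ q →
      Int.gcd a q = 1 → |α - (a : ℝ) / q| < 1 / (q : ℝ) ^ 2 →
      ∑ n ∈ Finset.Icc 1 ⌊X⌋₊, minInv (X * Y / (n : ℝ)) (α * n)
        ≤ C * (X * Y * (1 / (q : ℝ) + 1 / Y + (q : ℝ) / (X * Y)) * Real.log (2 * X * q)) := by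
  refine ⟨34, by norm_num, fun X Y α a q hX hY hq hgcd happ => ?_⟩
  have hq' : (1 : ℝ) ≤ q := by exact_mod_cast hq
  have hN : (⌊X⌋₊ : ℝ) ≤ X := Nat.floor_le (by linarith)
  set L := Real.log (2 * X * q)
  have hL2 : Real.log 2 ≤ L := Real.log_le_log two_pos (by nlinarith)
  have hLN : Real.log (⌊X⌋₊ + 1) ≤ L := Real.log_le_log (by positivity) (by nlinarith)
  have hLq : Real.log q ≤ L := Real.log_le_log (by positivity) (by nlinarith)
  have hL1 : 1 ≤ 2 * L := by linarith [Real.log_two_gt_d9]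
  have hexp : X * Y * (1 / (q : ℝ) + 1 / Y + (q : ℝ) / (X * Y)) = X * Y / q + X + q := by
    field_simp
  rw [hexp]
  calc ∑ n ∈ Icc 1 ⌊X⌋₊, minInv (X * Y / n) (α * n)
      ≤ 8 * (X * Y / q) * (1 + Real.log (⌊X⌋₊ + 1)) + (⌊X⌋₊ + q) * (14 + 6 * Real.log q) :=
        sum_minInv_div_le hq hgcd happ.le (by positivity) _
    _ ≤ 8 * (X * Y / q) * (3 * L) + (X + q) * (34 * L) := by gcongr <;> linarith
    _ ≤ 34 * ((X * Y / q + X + q) * L) := by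
        have : 0 ≤ X * Y / q * L := mul_nonneg (by positivity) (by linarith)
        nlinarith
end
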